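/- For every nonzero vector q ∈ ℝ³, the sequence of normalized vectors (T·R⁻¹)^t·q / ‖(T·R⁻¹)^t·q‖ (t = 1, 2, 3, ...) converges, as t → ∞, to v̂ or to −v̂, where v̂ = v/‖v‖ is the normalized eigenvector v = (1,0,3) of T·R⁻¹. -/

import Mathlib

open Matrix Filter

/-- The matrix `R`. -/
def R : Matrix (Fin 3) (Fin 3) ℝ := !![0,0,-1; 1,0,-1; 0,1,-1]

/-- The matrix `T`. -/
def T : Matrix (Fin 3) (Fin 3) ℝ := !![-1,0,0; 2,1,0; -4,0,1]

/-- The eigenvector `v = (1,0,3)` of `T·R⁻¹`. -/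
def v : Fin 3 → ℝ := ![1,0,3]

/-- The Euclidean norm on `ℝ³`. -/
noncomputable def enorm3 (p : Fin 3 → ℝ) : ℝ :=
  Real.sqrt (p 0 ^ 2 + p 1 ^ 2 + p 2 ^ 2)

/-- The nilpotent part of `T·R⁻¹`. -/
def Naux : Matrix (Fin 3) (Fin 3) ℝ := !![0,-1,0; -3,1,1; 3,-4,-1]

lemma hRinv : R⁻¹ = !![-1,1,0; -1,0,1; -1,0,0] := by
  apply Matrix.inv_eq_right_inv
  norm_num [R, Matrix.mul_fin_three]
  exact Matrix.one_fin_three.symm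

lemma hTR : T * R⁻¹ = !![1,-1,0; -3,2,1; 3,-4,0] := by
  rw [hRinv]
  norm_num [T, Matrix.mul_fin_three]

lemma pow_mulVec (q : Fin 3 → ℝ) (t : ℕ) :
    ((T * R⁻¹) ^ t).mulVec q =
      q + (t : ℝ) • Naux.mulVec q
        + ((t : ℝ) * ((t : ℝ) - 1) / 2) • ((3 * q 0 - q 1 - q 2) • v) := by
  induction t with
  | zero => simp
  | succ t ih =>
      rw [pow_succ', ← Matrix.mulVec_mulVec, ih, hTR]
      funext i
      fin_cases i <;>
        simp [Matrix.mulVec, dotProduct, Fin.sum_univ_three, Naux, v,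
          Matrix.vecHead, Matrix.vecTail, Function.comp] <;>
        push_cast <;> ring

lemma enorm3_pos {p : Fin 3 → ℝ} (hp : p ≠ 0) : 0 < enorm3 p := by
  rw [enorm3, Real.sqrt_pos]
  rcases eq_or_lt_of_le (by positivity : (0:ℝ) ≤ p 0 ^ 2 + p 1 ^ 2 + p 2 ^ 2) with h | h
  · exfalso
    apply hp
    have h0 : p 0 = 0 := by nlinarith [sq_nonneg (p 0), sq_nonneg (p 1), sq_nonneg (p 2)]
    have h1 : p 1 = 0 := by nlinarith [sq_nonneg (p 0), sq_nonneg (p 1), sq_nonneg (p 2)]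
    have h2 : p 2 = 0 := by nlinarith [sq_nonneg (p 0), sq_nonneg (p 1), sq_nonneg (p 2)]
    funext i
    fin_cases i
    · exact h0
    · exact h1
    · exact h2
  · exact h

lemma enorm3_smul (s : ℝ) (p : Fin 3 → ℝ) : enorm3 (s • p) = |s| * enorm3 p := by
  simp only [enorm3, Pi.smul_apply, smul_eq_mul]
  rw [show (s * p 0) ^ 2 + (s * p 1) ^ 2 + (s * p 2) ^ 2
      = s ^ 2 * (p 0 ^ 2 + p 1 ^ 2 + p 2 ^ 2) by ring,
    Real.sqrt_mul (sq_nonneg s), Real.sqrt_sq_eq_abs]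

lemma continuous_enorm3 : Continuous enorm3 := by
  unfold enorm3
  fun_prop

lemma normalize_smul (s : ℝ) (hs : 0 < s) (y : Fin 3 → ℝ) :
    (enorm3 (s • y))⁻¹ • (s • y) = (enorm3 y)⁻¹ • y := by
  rw [enorm3_smul, abs_of_pos hs, smul_smul]
  by_cases h : enorm3 y = 0
  · simp [h]
  · rw [mul_inv]
    congr 1
    field_simp

lemma key (x : ℕ → Fin 3 → ℝ) (g : ℕ → ℝ) (L : Fin 3 → ℝ) (hL : L ≠ 0)
    (hg : ∀ᶠ t in atTop, 0 < g t)
    (hx : Tendsto (fun t => (g t)⁻¹ • x t) atTop (nhds L)) :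
    Tendsto (fun t => (enorm3 (x t))⁻¹ • x t) atTop (nhds ((enorm3 L)⁻¹ • L)) := by
  have hcont : ContinuousAt (fun y : Fin 3 → ℝ => (enorm3 y)⁻¹ • y) L :=
    ContinuousAt.smul (continuous_enorm3.continuousAt.inv₀ (enorm3_pos hL).ne')
      continuousAt_id
  have h2 := hcont.tendsto.comp hx
  refine h2.congr' ?_
  filter_upwards [hg] with t ht
  exact normalize_smul ((g t)⁻¹) (by positivity) (x t)

lemma v_ne_zero : v ≠ 0 := by
  intro h
  have := congrFun h 0
  simp [v] at this

lemma normalize_dv (d : ℝ) (hd : d ≠ 0) :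
    (enorm3 (d • v))⁻¹ • (d • v) = (enorm3 v)⁻¹ • v ∨
    (enorm3 (d • v))⁻¹ • (d • v) = -((enorm3 v)⁻¹ • v) := by
  rcases hd.lt_or_gt with h | h
  · right
    rw [enorm3_smul, abs_of_neg h, smul_smul, mul_inv, ← neg_smul]
    congr 1
    have := (enorm3_pos v_ne_zero).ne'
    field_simp
  · left
    exact normalize_smul d h v

lemma t_sub_one_atTop : Tendsto (fun t : ℕ => (t : ℝ) - 1) atTop atTop :=
  tendsto_atTop_add_const_right _ (-1) tendsto_natCast_atTop_atTop

lemma g2_atTop : Tendsto (fun t : ℕ => (t : ℝ) * ((t : ℝ) - 1) / 2) atTop atTop :=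
  (tendsto_natCast_atTop_atTop.atTop_mul_atTop₀ t_sub_one_atTop).atTop_div_const
    (by norm_num)

lemma h1_lim : Tendsto (fun t : ℕ => ((t : ℝ) * ((t : ℝ) - 1) / 2)⁻¹) atTop (nhds 0) :=
  g2_atTop.inv_tendsto_atTop

lemma hinv_lim : Tendsto (fun t : ℕ => ((t : ℝ))⁻¹) atTop (nhds 0) :=
  tendsto_inv_atTop_zero.comp tendsto_natCast_atTop_atTop

lemma h2_lim : Tendsto (fun t : ℕ => ((t : ℝ) * ((t : ℝ) - 1) / 2)⁻¹ * (t : ℝ))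
    atTop (nhds 0) := by
  have h : Tendsto (fun t : ℕ => 2 * ((t : ℝ) - 1)⁻¹) atTop (nhds 0) := by
    have := (t_sub_one_atTop.inv_tendsto_atTop).const_mul (2 : ℝ)
    simpa using this
  refine h.congr' ?_
  filter_upwards [eventually_ge_atTop 2] with t ht
  have h2 : (2 : ℝ) ≤ (t : ℝ) := by exact_mod_cast ht
  have ht0 : (t : ℝ) ≠ 0 := by linarith
  have ht1 : (t : ℝ) - 1 ≠ 0 := by linarith
  field_simp

/-- For every nonzero `q ∈ ℝ³`, the normalized vectors `(T·R⁻¹)^t·q / ‖(T·R⁻¹)^t·q‖`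
converge, as `t → ∞`, to `v̂ = v/‖v‖` or to `−v̂`. -/
theorem TRinv_pow_normalized_tendsto (q : Fin 3 → ℝ) (hq : q ≠ 0) :
    Tendsto (fun t : ℕ => (enorm3 (((T * R⁻¹) ^ t).mulVec q))⁻¹ • ((T * R⁻¹) ^ t).mulVec q)
      atTop (nhds ((enorm3 v)⁻¹ • v)) ∨
    Tendsto (fun t : ℕ => (enorm3 (((T * R⁻¹) ^ t).mulVec q))⁻¹ • ((T * R⁻¹) ^ t).mulVec q)
      atTop (nhds (-((enorm3 v)⁻¹ • v))) := by
  obtain ⟨c, hc⟩ : ∃ c : ℝ, c = 3 * q 0 - q 1 - q 2 := ⟨_, rfl⟩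
  obtain ⟨u, hu⟩ : ∃ u : Fin 3 → ℝ, u = Naux.mulVec q := ⟨_, rfl⟩
  have hx : ∀ t : ℕ, ((T * R⁻¹) ^ t).mulVec q
      = q + (t : ℝ) • u + ((t : ℝ) * ((t : ℝ) - 1) / 2) • (c • v) := by
    intro t; rw [hc, hu]; exact pow_mulVec q t
  by_cases hc0 : c ≠ 0
  · have hL : c • v ≠ 0 := smul_ne_zero hc0 v_ne_zero
    have hlim : Tendsto (fun t : ℕ =>
        (((t : ℝ) * ((t : ℝ) - 1) / 2))⁻¹ • (((T * R⁻¹) ^ t).mulVec q))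
        atTop (nhds (c • v)) := by
      have main : Tendsto (fun t : ℕ =>
          (((t : ℝ) * ((t : ℝ) - 1) / 2))⁻¹ • q
            + ((((t : ℝ) * ((t : ℝ) - 1) / 2))⁻¹ * (t : ℝ)) • u + c • v)
          atTop (nhds ((0 : ℝ) • q + (0 : ℝ) • u + c • v)) :=
        ((h1_lim.smul_const q).add (h2_lim.smul_const u)).add tendsto_const_nhds
      simp only [zero_smul, zero_add] at main
      refine main.congr' ?_
      filter_upwards [eventually_ge_atTop 2] with t ht
      have h2 : (2 : ℝ) ≤ (t : ℝ) := by exact_mod_cast ht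
      have hgpos : (0 : ℝ) < (t : ℝ) * ((t : ℝ) - 1) / 2 := by nlinarith
      rw [hx t, smul_add, smul_add, smul_smul, smul_smul,
        inv_mul_cancel₀ hgpos.ne', one_smul]
    have hkey := key _ _ _ hL (by
        filter_upwards [eventually_ge_atTop 2] with t ht
        have h2 : (2 : ℝ) ≤ (t : ℝ) := by exact_mod_cast ht
        nlinarith) hlim
    rcases normalize_dv c hc0 with h | h
    · left; rwa [h] at hkey
    · right; rwa [h] at hkey
  · push_neg at hc0
    have hcq : 3 * q 0 - q 1 - q 2 = 0 := by rw [← hc]; exact hc0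
    have huv : u = (-q 1) • v := by
      funext i
      fin_cases i <;>
        simp [hu, Naux, Matrix.mulVec, dotProduct, Fin.sum_univ_three, v,
          Matrix.vecHead, Matrix.vecTail, Function.comp] <;>
        linarith [hcq]
    by_cases hq1 : q 1 ≠ 0
    · obtain ⟨d, hd⟩ : ∃ d : ℝ, d = -q 1 := ⟨_, rfl⟩
      have hd0 : d ≠ 0 := by rw [hd]; exact neg_ne_zero.mpr hq1
      have hL : d • v ≠ 0 := smul_ne_zero hd0 v_ne_zero
      have hlim : Tendsto (fun t : ℕ =>
          ((t : ℝ))⁻¹ • (((T * R⁻¹) ^ t).mulVec q)) atTop (nhds (d • v)) := by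
        have main : Tendsto (fun t : ℕ => ((t : ℝ))⁻¹ • q + d • v)
            atTop (nhds ((0 : ℝ) • q + d • v)) :=
          (hinv_lim.smul_const q).add tendsto_const_nhds
        simp only [zero_smul, zero_add] at main
        refine main.congr' ?_
        filter_upwards [eventually_ge_atTop 1] with t ht
        have h1 : (1 : ℝ) ≤ (t : ℝ) := by exact_mod_cast ht
        rw [hx t, hc0, zero_smul, smul_zero, add_zero, huv, ← hd, smul_add,
          smul_smul, inv_mul_cancel₀ (by linarith), one_smul]
      have hkey := key _ _ _ hL (by
          filter_upwards [eventually_ge_atTop 1] with t ht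
          have h1 : (1 : ℝ) ≤ (t : ℝ) := by exact_mod_cast ht
          linarith) hlim
      rcases normalize_dv d hd0 with h | h
      · left; rwa [h] at hkey
      · right; rwa [h] at hkey
    · push_neg at hq1
      have hqv : q = q 0 • v := by
        funext i
        fin_cases i <;> simp [v, hq1] <;> linarith [hcq, hq1]
      have hq0 : q 0 ≠ 0 := by
        intro h
        exact hq (by rw [hqv, h, zero_smul])
      have hconst : ∀ t : ℕ, ((T * R⁻¹) ^ t).mulVec q = q := by
        intro t
        rw [hx t, hc0, zero_smul, smul_zero, add_zero, huv, hq1, neg_zero, zero_smul,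
          smul_zero, add_zero]
      have hkey : Tendsto (fun t : ℕ => (enorm3 (((T * R⁻¹) ^ t).mulVec q))⁻¹
          • ((T * R⁻¹) ^ t).mulVec q) atTop (nhds ((enorm3 q)⁻¹ • q)) := by
        simp only [hconst]
        exact tendsto_const_nhds
      have hq' : (enorm3 q)⁻¹ • q = (enorm3 (q 0 • v))⁻¹ • (q 0 • v) := by
        rw [← hqv]
      rcases normalize_dv (q 0) hq0 with h | h
      · left; rwa [hq', h] at hkey
      · right; rwa [hq', h] at hkey
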